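/- Consider the R-linear maps g : R³ → R defined by g(a,b,c) = V²·a + Q·V·b + Q²·c, and A : R³ → R³ defined by A(x,y,z) = (Q·x, V·x + Q·y, V·y + Q·z). Then ker(g) = range(A). -/

import Mathlib

open Polynomial CategoryTheory

noncomputable section

/-- The field `F = ℤ/2ℤ`. -/
abbrev Fld := ZMod 2

/-- The polynomial ring `F[[V]][Q]` (polynomials in `Q` over the power series ring `F[[V]]`). -/
abbrev Rpoly := Polynomial (PowerSeries Fld)

/-- The ring `R = F[[V]][Q]/(Q³)`. -/
abbrev Rring := Rpoly ⧸ Ideal.span ({(X : Rpoly) ^ 3} : Set Rpoly)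

/-- `Q`, the image in `R` of the polynomial variable. -/
def Qe : Rring := Ideal.Quotient.mk (Ideal.span ({(X : Rpoly) ^ 3} : Set Rpoly)) (X : Rpoly)

/-- `V`, the image in `R` of the power series variable. -/
def Ve : Rring := Ideal.Quotient.mk (Ideal.span ({(X : Rpoly) ^ 3} : Set Rpoly)) (C PowerSeries.X)
/-- `g(a,b,c) = V²·a + Q·V·b + Q²·c`. -/
def g3 : (Rring × Rring × Rring) →ₗ[Rring] Rring where
  toFun p := Ve ^ 2 * p.1 + Qe * Ve * p.2.1 + Qe ^ 2 * p.2.2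
  map_add' p q := by simp; ring
  map_smul' r p := by simp [smul_eq_mul]; ring

/-- `A(x,y,z) = (Q·x, V·x + Q·y, V·y + Q·z)`. -/
def A3 : (Rring × Rring × Rring) →ₗ[Rring] (Rring × Rring × Rring) where
  toFun p := (Qe * p.1, Ve * p.1 + Qe * p.2.1, Ve * p.2.1 + Qe * p.2.2)
  map_add' p q := by
    simp only [Prod.ext_iff, Prod.fst_add, Prod.snd_add, Prod.mk_add_mk]
    refine ⟨by ring, by ring, by ring⟩
  map_smul' r p := by
    simp only [Prod.ext_iff, Prod.smul_fst, Prod.smul_snd, Prod.smul_mk, smul_eq_mul,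
      RingHom.id_apply]
    refine ⟨by ring, by ring, by ring⟩

/-!
Lift a triple in the kernel of `g` to `F[[V]][Q]`, where `V²a + QVb + Q²c` becomes divisible
by `Q³`. Comparing constant coefficients and cancelling the non-zero-divisor `V` peels off one
power of `Q` at a time: `a = Qx`, then `Vx + b = Qy`, then `Vy + c = Qz`, and in characteristic 2
these say exactly that `(a, b, c) = A(x, y, z)`. Conversely `g ∘ A = 2QV²x + 2Q²Vy + Q³z = 0`.
-/

instance PowerSeries.charP {R : Type*} [Semiring R] (p : ℕ) [CharP R p] :
    CharP (PowerSeries R) p :=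
  charP_of_injective_ringHom PowerSeries.C_injective p

namespace Polynomial

theorem exists_eq_X_mul_of_X_pow_succ_dvd {S : Type*} [CommSemiring S] {v : S}
    (hv : IsLeftRegular v) {n : ℕ} {p q : S[X]} (h : X ^ (n + 1) ∣ C v * p + X * q) :
    ∃ r, p = X * r ∧ X ^ n ∣ C v * r + q := by
  have hp : p.coeff 0 = 0 := by
    have := X_dvd_iff.mp ((dvd_pow_self X n.succ_ne_zero).trans h)
    simp only [coeff_add, coeff_C_mul, coeff_X_mul_zero, add_zero] at this
    exact hv (this.trans (mul_zero v).symm)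
  obtain ⟨r, rfl⟩ := X_dvd_iff.mpr hp
  refine ⟨r, rfl, ?_⟩
  rwa [pow_succ', mul_left_comm, ← mul_add, isRegular_X.left.dvd_cancel_left] at h

theorem exists_of_X_pow_three_dvd {S : Type*} [CommRing S] [CharP S 2] {v : S}
    (hv : IsLeftRegular v) {a b c : S[X]}
    (h : X ^ 3 ∣ C (v ^ 2) * a + X * C v * b + X ^ 2 * c) :
    ∃ x y z : S[X], a = X * x ∧ b = C v * x + X * y ∧ c = C v * y + X * z := by
  obtain ⟨x, rfl, hx⟩ := exists_eq_X_mul_of_X_pow_succ_dvd (n := 2) (hv.pow 2) (p := a)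
    (q := C v * b + X * c) (by convert h using 1; ring)
  obtain ⟨y, hy, hyz⟩ := exists_eq_X_mul_of_X_pow_succ_dvd (n := 1) hv (p := C v * x + b)
    (q := c) (by convert hx using 1; simp only [C_pow]; ring)
  obtain ⟨z, hz⟩ := pow_one (X : S[X]) ▸ hyz
  refine ⟨x, y, z, rfl, ?_, ?_⟩
  · linear_combination hy - C v * x * CharTwo.two_eq_zero (R := S[X])
  · linear_combination hz - C v * y * CharTwo.two_eq_zero (R := S[X])

end Polynomial

theorem Qe_pow_three : Qe ^ 3 = 0 := by
  rw [Qe, ← map_pow, Ideal.Quotient.eq_zero_iff_mem]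
  exact Ideal.mem_span_singleton_self _

theorem two_eq_zero_Rring : (2 : Rring) = 0 :=
  (map_ofNat (Ideal.Quotient.mk _) 2).symm.trans
    ((congrArg (Ideal.Quotient.mk _) (CharTwo.two_eq_zero (R := Rpoly))).trans (map_zero _))

theorem g3_comp_A3 : g3 ∘ₗ A3 = 0 := by
  refine LinearMap.ext fun p => ?_
  simp only [LinearMap.comp_apply, g3, A3, LinearMap.coe_mk, AddHom.coe_mk, LinearMap.zero_apply]
  linear_combination (Qe * Ve ^ 2 * p.1 + Qe ^ 2 * Ve * p.2.1) * two_eq_zero_Rring +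
    p.2.2 * Qe_pow_three

theorem ker_g3_le_range_A3 : LinearMap.ker g3 ≤ LinearMap.range A3 := by
  rintro ⟨a, b, c⟩ hker
  obtain ⟨a, rfl⟩ := Ideal.Quotient.mk_surjective a
  obtain ⟨b, rfl⟩ := Ideal.Quotient.mk_surjective b
  obtain ⟨c, rfl⟩ := Ideal.Quotient.mk_surjective c
  have hdvd :
      (X : Rpoly) ^ 3 ∣ C (PowerSeries.X ^ 2) * a + X * C PowerSeries.X * b + X ^ 2 * c := by
    rw [← Ideal.mem_span_singleton, ← Ideal.Quotient.eq_zero_iff_mem,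
      ← LinearMap.mem_ker.mp hker]
    simp only [g3, Qe, Ve, LinearMap.coe_mk, AddHom.coe_mk, map_add, map_mul, map_pow]
  obtain ⟨x, y, z, rfl, rfl, rfl⟩ :=
    exists_of_X_pow_three_dvd (IsRegular.of_ne_zero PowerSeries.X_ne_zero).left hdvd
  exact ⟨(Ideal.Quotient.mk _ x, Ideal.Quotient.mk _ y, Ideal.Quotient.mk _ z),
    by simp [A3, Qe, Ve]⟩

/-- `ker g = range A`. -/
theorem stmt11 : LinearMap.ker g3 = LinearMap.range A3 :=
  le_antisymm ker_g3_le_range_A3 (LinearMap.range_le_ker_iff.mpr g3_comp_A3)
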